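/- arXiv:1809.00468 — 3 statements merged into one kernel-verified Lean document; each statement's English description precedes it below -/
import Mathlib

section
/- Let $G$ be a bipartite graph with bipartition $A \cup B$ and suppose that the weighted graph $W_G$ on $A$ (with weight $d_G(u,v) = |N_G(u)\cap N_G(v)|$) contains a complete graph $K_{s+t-1}$ all of whose edges are heavy, i.e., there are $s+t-1$ vertices of $A$ every pair of which has at least $\binom{s+t-1}{2}$ common neighbours in $B$. Then $G$ contains a copy of $L'_{s,t}$, the subdivision of $L_{s,t}$. -/
open Finset SimpleGraph

/-- `L_{s,t}`: complete graph on `S ∪ T` (`|S| = s`, `|T| = t-1`) minus the edges inside `S`;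
    i.e. `xy` is an edge iff `x ≠ y` and at least one of them lies in `T` (the right summand). -/
def Lst (s t : ℕ) : SimpleGraph (Fin s ⊕ Fin (t - 1)) :=
  SimpleGraph.fromRel (fun x y => x.isRight ∨ y.isRight)

/-- The subdivision of a graph `H`: the bipartite graph on `V(H) ⊕ E(H)` joining a vertex
    to an edge iff the vertex is an endpoint of the edge. -/
def Subdiv {V : Type*} (H : SimpleGraph V) : SimpleGraph (V ⊕ H.edgeSet) :=
  SimpleGraph.fromRel
    (fun x y => ∃ (v : V) (e : H.edgeSet), x = Sum.inl v ∧ y = Sum.inr e ∧ v ∈ (e : Sym2 V))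

/-- `G` contains a copy of `H` (a subgraph isomorphic to `H`). -/
def Contains {V W : Type*} (G : SimpleGraph V) (H : SimpleGraph W) : Prop :=
  ∃ f : H →g G, Function.Injective f

theorem stmt1 {V : Type*} [Fintype V] [DecidableEq V] (G : SimpleGraph V)
    [DecidableRel G.Adj] (A B : Finset V) (s t : ℕ) (hs : 1 ≤ s) (ht : 3 ≤ t)
    (hdisj : Disjoint A B) (hpart : A ∪ B = Finset.univ)
    (hbip : ∀ u v, G.Adj u v → (u ∈ A ∧ v ∈ B) ∨ (u ∈ B ∧ v ∈ A))
    (f : Fin (s + t - 1) → V) (hfA : ∀ i, f i ∈ A) (hinj : Function.Injective f)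
    (hheavy : ∀ i j, i ≠ j →
      (s + t - 1).choose 2 ≤ (G.neighborFinset (f i) ∩ G.neighborFinset (f j)).card) :
    Contains G (Subdiv (Lst s t)) := by
  classical
  have hcard : s + (t - 1) = s + t - 1 := by omega
  -- an injective map from the vertices of `Lst` into `A` with all pairs heavy
  obtain ⟨F, hF_inj, hFA, hFheavy⟩ :
      ∃ F : Fin s ⊕ Fin (t - 1) → V, Function.Injective F ∧ (∀ x, F x ∈ A) ∧
        ∀ x y, x ≠ y → (s + t - 1).choose 2 ≤
          (G.neighborFinset (F x) ∩ G.neighborFinset (F y)).card := by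
    refine ⟨fun x => f (Fin.cast hcard (finSumFinEquiv x)), ?_, fun x => hfA _, ?_⟩
    · intro x y h
      exact finSumFinEquiv.injective (Fin.cast_injective hcard (hinj h))
    · intro x y hxy
      refine hheavy _ _ (fun h => hxy ?_)
      exact finSumFinEquiv.injective (Fin.cast_injective hcard h)
  -- candidate sets for each potential edge
  obtain ⟨cand, hcand_mem⟩ :
      ∃ cand : Sym2 (Fin s ⊕ Fin (t - 1)) → Finset V,
        ∀ e w, w ∈ cand e ↔ ∀ v ∈ e, G.Adj (F v) w :=
    ⟨fun e => Finset.univ.filter (fun w => ∀ v ∈ e, G.Adj (F v) w),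
      fun e w => by simp⟩
  have hcand_card : ∀ e ∈ (Lst s t).edgeSet, (s + t - 1).choose 2 ≤ (cand e).card := by
    intro e he
    induction e with
    | h i j =>
      rw [SimpleGraph.mem_edgeSet] at he
      have hij : i ≠ j := he.ne
      refine le_trans (hFheavy _ _ hij) (Finset.card_le_card ?_)
      intro w hw
      rw [Finset.mem_inter, SimpleGraph.mem_neighborFinset,
        SimpleGraph.mem_neighborFinset] at hw
      rw [hcand_mem]
      intro v hv
      rcases Sym2.mem_iff.mp hv with rfl | rfl
      · exact hw.1
      · exact hw.2
  -- total number of edges is at most `(s+t-1).choose 2`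
  have hedges : Fintype.card ((Lst s t).edgeSet) ≤ (s + t - 1).choose 2 := by
    have h1 : ((Lst s t).edgeFinset).card ≤
        (Fintype.card (Fin s ⊕ Fin (t - 1))).choose 2 :=
      SimpleGraph.card_edgeFinset_le_card_choose_two
    have h2 : Fintype.card (Fin s ⊕ Fin (t - 1)) = s + t - 1 := by simp [hcard]
    rw [h2] at h1
    rwa [SimpleGraph.edgeFinset, Set.toFinset_card] at h1
  -- Hall's condition
  have hall : ∀ S : Finset ((Lst s t).edgeSet),
      S.card ≤ (S.biUnion (fun e => cand (e : Sym2 _))).card := by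
    intro S
    rcases S.eq_empty_or_nonempty with rfl | ⟨e, he⟩
    · simp
    calc S.card ≤ Fintype.card ((Lst s t).edgeSet) := Finset.card_le_univ S
      _ ≤ (s + t - 1).choose 2 := hedges
      _ ≤ (cand (e : Sym2 _)).card := hcand_card _ e.2
      _ ≤ (S.biUnion (fun e => cand (e : Sym2 _))).card := by
          exact Finset.card_le_card
            (Finset.subset_biUnion_of_mem
              (fun e : (Lst s t).edgeSet => cand (e : Sym2 (Fin s ⊕ Fin (t - 1)))) he)
  obtain ⟨g, hg_inj, hg_mem⟩ :=
    (Finset.all_card_le_biUnion_card_iff_exists_injective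
      (fun e : (Lst s t).edgeSet => cand (e : Sym2 _))).mp hall
  have hg_adj : ∀ (e : (Lst s t).edgeSet) (v : Fin s ⊕ Fin (t - 1)),
      v ∈ (e : Sym2 _) → G.Adj (F v) (g e) := by
    intro e v hv
    exact (hcand_mem _ _).mp (hg_mem e) v hv
  have hgB : ∀ e : (Lst s t).edgeSet, g e ∈ B := by
    intro e
    have hv : ((e : Sym2 (Fin s ⊕ Fin (t - 1))).out).1 ∈ (e : Sym2 (Fin s ⊕ Fin (t - 1))) :=
      Sym2.out_fst_mem (e : Sym2 (Fin s ⊕ Fin (t - 1)))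
    have hadj := hg_adj e _ hv
    rcases hbip _ _ hadj with ⟨_, h⟩ | ⟨h, _⟩
    · exact h
    · exact absurd (hFA _) (Finset.disjoint_right.mp hdisj h)
  -- build the homomorphism
  have hφ_inj : Function.Injective (Sum.elim F (fun e : (Lst s t).edgeSet => g e)) := by
    rintro (x | x) (y | y) h <;> simp only [Sum.elim_inl, Sum.elim_inr] at h
    · exact congrArg Sum.inl (hF_inj h)
    · exact absurd (h ▸ hgB y) fun hb => Finset.disjoint_left.mp hdisj (hFA x) hb
    · exact absurd (h ▸ hgB x) fun hb => Finset.disjoint_left.mp hdisj (hFA y) hb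
    · exact congrArg Sum.inr (hg_inj h)
  refine ⟨⟨Sum.elim F (fun e => g e), ?_⟩, hφ_inj⟩
  · intro x y hxy
    rw [Subdiv, SimpleGraph.fromRel_adj] at hxy
    obtain ⟨hne, h | h⟩ := hxy
    · obtain ⟨v, e, rfl, rfl, hv⟩ := h
      exact hg_adj e v hv
    · obtain ⟨v, e, rfl, rfl, hv⟩ := h
      exact (hg_adj e v hv).symm
end

section
/- Let $s \geq 1$, $t \geq 3$ be integers, and let $G$ be an $L'_{s,t}$-free bipartite graph with bipartition $A \cup B$, $|B| = n$, in which every vertex of $A$ has degree at least $\delta$. Then for any subset $U \subseteq A$ with $|U| \geq \frac{8(s+t)n}{\delta}$ and $|U| \geq 2$, the number of light edges (pairs $\{u,v\} \subseteq U$ with $1 \leq |N_G(u)\cap N_G(v)| < \binom{s+t-1}{2}$) within $U$ is at least $\frac{\delta^2}{8(s+t)^3 n}\binom{|U|}{2}$. -/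
open Finset SimpleGraph

/-!
Call a pair of vertices of `A` heavy if it has at least `C = (s+t-1).choose 2` common neighbours.
A heavy clique on `s + t - 1` vertices of `A` would contain a copy of `L'_{s,t}`: put the vertices
of `L_{s,t}` on the clique; each of its at most `C` edges has at least `C` candidate subdivision
vertices (common neighbours, which lie outside the independent set `A`), so Hall's theorem picks
distinct ones. Hence the heavy pairs in `A` form a `K_{s+t-1}`-free graph.

Count the paths `u - b - v` with `u ≠ v` in `U`, writing `d_b = |N(b) ∩ U|` and `k = s + t - 2`.
There are `∑ d_b (d_b - 1)` of them. By Turán's theorem at most `(1 - 1/k) ∑ d_b²` have heavy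
ends, and each of the `L` light pairs is the pair of ends of fewer than `C` of them. Hence
`∑ d_b² ≤ k ∑ d_b + k C L`, and Cauchy–Schwarz `(∑ d_b)² ≤ n ∑ d_b²` together with
`∑ d_b ≥ δ |U| ≥ 8 (s + t) n` gives `(δ |U|)² ≤ 2 k C n L`.
-/

namespace SimpleGraph

variable {V : Type*}

theorem CliqueFree.two_mul_mul_card_edgeFinset_le [Fintype V] {G : SimpleGraph V}
    [DecidableRel G.Adj] {r : ℕ} (cf : G.CliqueFree (r + 1)) :
    2 * r * #G.edgeFinset ≤ (r - 1) * Fintype.card V ^ 2 := by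
  rcases r.eq_zero_or_pos with rfl | hr
  · simp
  obtain ⟨H, _, maxH⟩ := exists_isTuranMaximal (V := V) hr
  obtain ⟨e⟩ := (isTuranMaximal_iff_nonempty_iso_turanGraph hr).mp maxH
  calc 2 * r * #G.edgeFinset ≤ 2 * r * #H.edgeFinset := Nat.mul_le_mul_left _ (maxH.2 cf)
    _ = 2 * r * #(turanGraph (Fintype.card V) r).edgeFinset := by rw [e.card_edgeFinset_eq]
    _ ≤ _ := mul_card_edgeFinset_turanGraph_le

theorem card_dart_induce [DecidableEq V] (G : SimpleGraph V) [DecidableRel G.Adj]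
    (W : Finset V) :
    Fintype.card (G.induce (W : Set V)).Dart = #(W.offDiag.filter fun p ↦ G.Adj p.1 p.2) := by
  rw [← Fintype.card_coe]
  exact Fintype.card_congr
    { toFun d := ⟨(d.fst.1, d.snd.1), mem_filter.2
        ⟨mem_offDiag.2 ⟨d.fst.2, d.snd.2, fun h ↦ d.adj.ne (Subtype.ext h)⟩, d.adj⟩⟩
      invFun p :=
        have hp := mem_filter.1 p.2
        ⟨(⟨p.1.1, (mem_offDiag.1 hp.1).1⟩, ⟨p.1.2, (mem_offDiag.1 hp.1).2.1⟩), hp.2⟩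
      left_inv _ := rfl
      right_inv _ := rfl }

theorem CliqueFree.mul_card_filter_adj_offDiag_le [DecidableEq V] {G : SimpleGraph V}
    [DecidableRel G.Adj] {r : ℕ} (cf : G.CliqueFree (r + 1)) (W : Finset V) :
    r * #(W.offDiag.filter fun p ↦ G.Adj p.1 p.2) ≤ (r - 1) * #W ^ 2 := by
  have cfW : (G.induce (W : Set V)).CliqueFree (r + 1) :=
    cf.comap (Embedding.induce _).isContained
  have := cfW.two_mul_mul_card_edgeFinset_le
  rw [← card_dart_induce, dart_card_eq_twice_card_edges]
  simpa [mul_comm, mul_left_comm, mul_assoc] using this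

theorem not_adj_of_mem_left {G : SimpleGraph V} {A B : Finset V} (hdisj : Disjoint A B)
    (hbip : ∀ u v, G.Adj u v → (u ∈ A ∧ v ∈ B) ∨ (u ∈ B ∧ v ∈ A)) :
    ∀ x ∈ A, ∀ y ∈ A, ¬ G.Adj x y := fun x hx y hy hxy ↦ by
  rcases hbip x y hxy with ⟨-, hyB⟩ | ⟨hxB, -⟩
  exacts [Finset.disjoint_left.mp hdisj hy hyB, Finset.disjoint_left.mp hdisj hx hxB]

theorem neighborFinset_subset_right [Fintype V] {G : SimpleGraph V} [DecidableRel G.Adj]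
    {A B : Finset V} (hdisj : Disjoint A B)
    (hbip : ∀ u v, G.Adj u v → (u ∈ A ∧ v ∈ B) ∨ (u ∈ B ∧ v ∈ A)) :
    ∀ u ∈ A, G.neighborFinset u ⊆ B := fun u hu b hb ↦ by
  rcases hbip u b ((mem_neighborFinset _ _ _).mp hb) with ⟨-, hbB⟩ | ⟨huB, -⟩
  exacts [hbB, absurd huB (Finset.disjoint_left.mp hdisj hu)]

variable [Fintype V] [DecidableEq V] (G : SimpleGraph V) [DecidableRel G.Adj]

abbrev codegree (u v : V) : ℕ := #(G.neighborFinset u ∩ G.neighborFinset v)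

abbrev lightPairs (U : Finset V) (C : ℕ) : Finset (V × V) :=
  U.offDiag.filter fun p ↦ 1 ≤ G.codegree p.1 p.2 ∧ G.codegree p.1 p.2 < C

theorem codegree_comm (u v : V) : G.codegree u v = G.codegree v u := by
  rw [codegree, inter_comm]

theorem contains_subdiv_of_card_edgeSet_le_codegree {W : Type*} [Finite W] (H : SimpleGraph W)
    (w : W → V) (hw : Function.Injective w) (hind : ∀ a b, ¬ G.Adj (w a) (w b))
    (hcodeg : ∀ a b, H.Adj a b → Nat.card H.edgeSet ≤ G.codegree (w a) (w b)) :
    Contains G (Subdiv H) := by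
  classical
  have : Fintype H.edgeSet := Fintype.ofFinite _
  let common (e : H.edgeSet) : Finset V :=
    univ.filter fun x ↦ ∀ a ∈ (e : Sym2 W), G.Adj (w a) x
  have hcommon (e : H.edgeSet) : Nat.card H.edgeSet ≤ #(common e) := by
    obtain ⟨e, he⟩ := e
    induction e using Sym2.ind with
    | _ a b =>
      convert hcodeg a b he using 2
      ext x
      simp [common]
  have hall (s : Finset H.edgeSet) : #s ≤ #(s.biUnion common) := by
    obtain rfl | ⟨e, he⟩ := s.eq_empty_or_nonempty
    · simp
    calc #s ≤ Nat.card H.edgeSet := by rw [Nat.card_eq_fintype_card]; exact card_le_univ s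
      _ ≤ #(common e) := hcommon e
      _ ≤ #(s.biUnion common) := card_le_card (subset_biUnion_of_mem common he)
  obtain ⟨g, hg, hgcommon⟩ := (all_card_le_biUnion_card_iff_exists_injective common).mp hall
  have hadj (e : H.edgeSet) (a : W) (ha : a ∈ (e : Sym2 W)) : G.Adj (w a) (g e) :=
    (mem_filter.mp (hgcommon e)).2 a ha
  have hne (a : W) (e : H.edgeSet) (h : w a = g e) : False :=
    hind _ a (h ▸ hadj e _ (e : Sym2 W).out_fst_mem)
  refine ⟨⟨Sum.elim w g, ?_⟩, ?_⟩
  · rintro x y ⟨-, ⟨a, e, rfl, rfl, ha⟩ | ⟨a, e, rfl, rfl, ha⟩⟩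
    · exact hadj e a ha
    · exact (hadj e a ha).symm
  · rintro (a | e) (b | f) h
    · exact congrArg Sum.inl (hw h)
    · exact (hne a f h).elim
    · exact (hne b e h.symm).elim
    · exact congrArg Sum.inr (hg h)

def heavyGraph (A : Finset V) (C : ℕ) : SimpleGraph V where
  Adj u v := u ≠ v ∧ u ∈ A ∧ v ∈ A ∧ C ≤ G.codegree u v
  symm := ⟨fun _ _ h ↦ ⟨h.1.symm, h.2.2.1, h.2.1, h.2.2.2.trans_eq (G.codegree_comm _ _)⟩⟩
  loopless := ⟨fun _ h ↦ h.1 rfl⟩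

instance (A : Finset V) (C : ℕ) : DecidableRel (G.heavyGraph A C).Adj :=
  fun _ _ ↦ inferInstanceAs (Decidable (_ ∧ _))

variable {G}

theorem filter_heavyGraph_adj_offDiag {A W : Finset V} (C : ℕ) (hW : W ⊆ A) :
    W.offDiag.filter (fun p ↦ (G.heavyGraph A C).Adj p.1 p.2) =
      W.offDiag.filter fun p ↦ C ≤ G.codegree p.1 p.2 := by
  refine filter_congr fun p hp ↦ ?_
  obtain ⟨h1, h2, hne⟩ := mem_offDiag.mp hp
  simp [heavyGraph, hne, hW h1, hW h2]

theorem cliqueFree_heavyGraph {W : Type*} [Fintype W] {H : SimpleGraph W} {A : Finset V}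
    {C : ℕ} (hA : ∀ x ∈ A, ∀ y ∈ A, ¬ G.Adj x y) (hW : 2 ≤ Fintype.card W)
    (hC : Nat.card H.edgeSet ≤ C) (hfree : ¬ Contains G (Subdiv H)) :
    (G.heavyGraph A C).CliqueFree (Fintype.card W) := by
  intro S hS
  obtain ⟨φ⟩ : Nonempty (W ≃ S) := Fintype.card_eq.mp (by simp [hS.card_eq])
  have hSA (x : V) (hx : x ∈ S) : x ∈ A := by
    obtain ⟨y, hy, hyx⟩ := S.exists_mem_ne (by rw [hS.card_eq]; omega) x
    exact (hS.isClique hx hy hyx.symm).2.1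
  refine hfree (G.contains_subdiv_of_card_edgeSet_le_codegree H (fun a ↦ φ a) ?_ ?_ ?_)
  · exact fun a b h ↦ φ.injective (Subtype.ext h)
  · exact fun a b ↦ hA _ (hSA _ (φ a).2) _ (hSA _ (φ b).2)
  · intro a b hab
    exact hC.trans (hS.isClique (φ a).2 (φ b).2 (by simpa using hab.ne)).2.2.2

theorem mul_card_heavy_pairs_le {A W : Finset V} {s t : ℕ}
    (hA : ∀ x ∈ A, ∀ y ∈ A, ¬ G.Adj x y) (ht : 0 < t) (hst : 3 ≤ s + t)
    (hfree : ¬ Contains G (Subdiv (Lst s t))) (hW : W ⊆ A) :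
    (s + t - 2) * #(W.offDiag.filter fun p ↦ (s + t - 1).choose 2 ≤ G.codegree p.1 p.2) ≤
      (s + t - 2 - 1) * #W ^ 2 := by
  classical
  have hcard : Fintype.card (Fin s ⊕ Fin (t - 1)) = s + t - 2 + 1 := by simp; omega
  have hC : Nat.card (Lst s t).edgeSet ≤ (s + t - 1).choose 2 := by
    rw [Nat.card_eq_fintype_card, ← edgeFinset_card, show s + t - 1 = s + t - 2 + 1 by omega,
      ← hcard]
    exact card_edgeFinset_le_card_choose_two
  have hcf := cliqueFree_heavyGraph hA (by omega) hC hfree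
  rw [hcard] at hcf
  rw [← filter_heavyGraph_adj_offDiag _ hW]
  exact hcf.mul_card_filter_adj_offDiag_le W

variable (G) (U : Finset V)

theorem sum_card_neighborFinset_inter_eq_sum_degree :
    ∑ b, #(G.neighborFinset b ∩ U) = ∑ u ∈ U, G.degree u := by
  simp_rw [← card_neighborFinset_eq_degree]
  convert sum_card_bipartiteAbove_eq_sum_card_bipartiteBelow (s := univ) (t := U) (r := G.Adj)
    using 3 with b _ u
  · ext; simp [bipartiteAbove, and_comm]
  · ext; simp [bipartiteBelow, adj_comm]

theorem sum_codegree_eq_sum_card_filter_offDiag (P : V × V → Prop) [DecidablePred P] :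
    ∑ p ∈ U.offDiag.filter P, G.codegree p.1 p.2 =
      ∑ b, #((G.neighborFinset b ∩ U).offDiag.filter P) := by
  convert sum_card_bipartiteAbove_eq_sum_card_bipartiteBelow (s := U.offDiag.filter P)
    (t := univ) (r := fun p b ↦ G.Adj p.1 b ∧ G.Adj p.2 b) using 3 with p _ b
  · ext; simp [bipartiteAbove]
  · ext; simp [bipartiteBelow, adj_comm]; tauto

variable {G U}

theorem sum_sq_card_neighborFinset_inter_le {k C : ℕ} (hk : 0 < k)
    (hturan : ∀ b, k * #((G.neighborFinset b ∩ U).offDiag.filter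
      fun p ↦ C ≤ G.codegree p.1 p.2) ≤ (k - 1) * #(G.neighborFinset b ∩ U) ^ 2) :
    ∑ b, #(G.neighborFinset b ∩ U) ^ 2 ≤ k * ∑ u ∈ U, G.degree u +
      k * C * #(G.lightPairs U C) := by
  set W : V → Finset V := fun b ↦ G.neighborFinset b ∩ U
  have htotal : ∑ b, #(W b).offDiag =
      ∑ p ∈ U.offDiag.filter (fun p ↦ C ≤ G.codegree p.1 p.2), G.codegree p.1 p.2 +
        ∑ p ∈ U.offDiag.filter (fun p ↦ ¬ C ≤ G.codegree p.1 p.2), G.codegree p.1 p.2 := by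
    rw [sum_filter_add_sum_filter_not]
    simpa using (sum_codegree_eq_sum_card_filter_offDiag G U fun _ ↦ True).symm
  have hheavy :
      k * ∑ p ∈ U.offDiag.filter (fun p ↦ C ≤ G.codegree p.1 p.2), G.codegree p.1 p.2 ≤
        (k - 1) * ∑ b, #(W b) ^ 2 := by
    rw [sum_codegree_eq_sum_card_filter_offDiag, mul_sum, mul_sum]
    exact sum_le_sum fun b _ ↦ hturan b
  have hlight :
      ∑ p ∈ U.offDiag.filter (fun p ↦ ¬ C ≤ G.codegree p.1 p.2), G.codegree p.1 p.2 ≤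
        C * #(G.lightPairs U C) := by
    rw [← sum_filter_of_ne (p := fun p : V × V ↦ 1 ≤ G.codegree p.1 p.2)
        fun _ _ h ↦ Nat.one_le_iff_ne_zero.mpr h,
      filter_filter, filter_congr fun _ _ ↦ and_comm.trans (and_congr_right' not_le), mul_comm,
      ← smul_eq_mul]
    exact sum_le_card_nsmul _ _ _ fun p hp ↦ (mem_filter.mp hp).2.2.le
  have hsq : ∑ b, #(W b) ^ 2 = ∑ b, #(W b).offDiag + ∑ b, #(W b) := by
    rw [← sum_add_distrib]
    refine sum_congr rfl fun b _ ↦ ?_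
    rw [offDiag_card, sq, Nat.sub_add_cancel (Nat.le_mul_self _)]
  rw [← sum_card_neighborFinset_inter_eq_sum_degree]
  obtain ⟨j, rfl⟩ : ∃ j, k = j + 1 := ⟨k - 1, by omega⟩
  rw [Nat.add_sub_cancel] at hheavy
  nlinarith [Nat.mul_le_mul_left (j + 1) hlight]

theorem sq_sum_degree_le {B : Finset V} (hB : ∀ u ∈ U, G.neighborFinset u ⊆ B) {k C : ℕ}
    (hk : 0 < k)
    (hturan : ∀ b, k * #((G.neighborFinset b ∩ U).offDiag.filter
      fun p ↦ C ≤ G.codegree p.1 p.2) ≤ (k - 1) * #(G.neighborFinset b ∩ U) ^ 2)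
    (hdeg : 2 * k * #B ≤ ∑ u ∈ U, G.degree u) :
    (∑ u ∈ U, G.degree u) ^ 2 ≤ 2 * k * C * #B * #(G.lightPairs U C) := by
  have hsupp (b : V) (hb : b ∉ B) : #(G.neighborFinset b ∩ U) = 0 := by
    refine card_eq_zero.mpr (eq_empty_of_forall_notMem fun u hu ↦ hb ?_)
    obtain ⟨hbu, hu⟩ := mem_inter.mp hu
    exact hB u hu ((mem_neighborFinset _ _ _).mpr ((mem_neighborFinset _ _ _).mp hbu).symm)
  have hCS : (∑ u ∈ U, G.degree u) ^ 2 ≤ #B * ∑ b, #(G.neighborFinset b ∩ U) ^ 2 := by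
    rw [← sum_card_neighborFinset_inter_eq_sum_degree,
      ← sum_subset (subset_univ B) fun b _ hb ↦ hsupp b hb,
      ← sum_subset (subset_univ B) fun b _ hb ↦ by rw [hsupp b hb, zero_pow two_ne_zero]]
    exact sq_sum_le_card_mul_sum_sq
  have hsq := sum_sq_card_neighborFinset_inter_le hk hturan
  nlinarith [Nat.mul_le_mul_left #B hsq, Nat.mul_le_mul_right (∑ u ∈ U, G.degree u) hdeg]

end SimpleGraph

theorem Nat.two_mul_choose_two_le_sq (m : ℕ) : 2 * m.choose 2 ≤ m ^ 2 := by
  rw [Nat.choose_two_right, sq]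
  exact Nat.mul_div_le _ _ |>.trans (by gcongr; omega)

theorem Nat.sub_two_mul_choose_two_le_pow_three (m : ℕ) : (m - 2) * (m - 1).choose 2 ≤ m ^ 3 :=
  calc _ ≤ m * m ^ 2 :=
        Nat.mul_le_mul (by omega) ((Nat.choose_le_pow _ _).trans (by gcongr; omega))
    _ = m ^ 3 := by ring

theorem stmt3_general {V : Type*} [Fintype V] [DecidableEq V] (G : SimpleGraph V)
    [DecidableRel G.Adj] (A B : Finset V) (s t : ℕ) (ht : 3 ≤ t)
    (hdisj : Disjoint A B)
    (hbip : ∀ u v, G.Adj u v → (u ∈ A ∧ v ∈ B) ∨ (u ∈ B ∧ v ∈ A))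
    (hfree : ¬ Contains G (Subdiv (Lst s t)))
    (n : ℕ) (hB : B.card = n) (δ : ℕ)
    (hdeg : ∀ a ∈ A, δ ≤ G.degree a)
    (U : Finset V) (hUA : U ⊆ A)
    (hU1 : (8 * (s + t) * n : ℝ) / δ ≤ U.card) :
    (δ : ℝ) ^ 2 / (8 * (s + t) ^ 3 * n) * (U.card.choose 2) ≤
      ((U.offDiag.filter (fun p =>
        1 ≤ (G.neighborFinset p.1 ∩ G.neighborFinset p.2).card ∧
        (G.neighborFinset p.1 ∩ G.neighborFinset p.2).card < (s + t - 1).choose 2)).card : ℝ)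
        / 2 := by
  obtain rfl | hδ := δ.eq_zero_or_pos
  · simp; positivity
  obtain rfl | hn := n.eq_zero_or_pos
  · simp; positivity
  have hU : 8 * (s + t) * n ≤ δ * #U := by
    rw [div_le_iff₀ (by positivity)] at hU1
    exact_mod_cast (by push_cast; linarith : ((8 * (s + t) * n : ℕ) : ℝ) ≤ (δ * #U : ℕ))
  have hσ : δ * #U ≤ ∑ u ∈ U, G.degree u := by
    simpa [mul_comm] using card_nsmul_le_sum U (G.degree ·) δ fun u hu ↦ hdeg u (hUA hu)
  have key := G.sq_sum_degree_le (B := B)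
    (fun u hu ↦ neighborFinset_subset_right hdisj hbip u (hUA hu)) (by omega)
    (fun b ↦ mul_card_heavy_pairs_le (not_adj_of_mem_left hdisj hbip) (by omega) (by omega)
      hfree (inter_subset_right.trans hUA))
    (by rw [hB]; exact (Nat.mul_le_mul_right n (by omega)).trans (hU.trans hσ))
  have hmain := calc δ ^ 2 * (2 * (#U).choose 2)
      _ ≤ (δ * #U) ^ 2 := by rw [mul_pow]; gcongr; exact Nat.two_mul_choose_two_le_sq _
      _ ≤ (∑ u ∈ U, G.degree u) ^ 2 := by gcongr
      _ ≤ _ := key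
      _ ≤ 8 * (s + t) ^ 3 * n * _ := by
        rw [hB, mul_assoc 2]
        gcongr ?_ * _ * _
        exact Nat.mul_le_mul (by norm_num) (Nat.sub_two_mul_choose_two_le_pow_three _)
  rw [div_mul_eq_mul_div, div_le_div_iff₀ (by positivity) two_pos]
  have := (Nat.cast_le (α := ℝ)).mpr hmain
  push_cast at this
  linarith

theorem stmt3 {V : Type*} [Fintype V] [DecidableEq V] (G : SimpleGraph V)
    [DecidableRel G.Adj] (A B : Finset V) (s t : ℕ) (hs : 1 ≤ s) (ht : 3 ≤ t)
    (hdisj : Disjoint A B) (hpart : A ∪ B = Finset.univ)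
    (hbip : ∀ u v, G.Adj u v → (u ∈ A ∧ v ∈ B) ∨ (u ∈ B ∧ v ∈ A))
    (hfree : ¬ Contains G (Subdiv (Lst s t)))
    (n : ℕ) (hB : B.card = n) (δ : ℕ)
    (hdeg : ∀ a ∈ A, δ ≤ G.degree a)
    (U : Finset V) (hUA : U ⊆ A)
    (hU1 : (8 * (s + t) * n : ℝ) / δ ≤ U.card) (hU2 : 2 ≤ U.card) :
    (δ : ℝ) ^ 2 / (8 * (s + t) ^ 3 * n) * (U.card.choose 2) ≤
      ((U.offDiag.filter (fun p =>
        1 ≤ (G.neighborFinset p.1 ∩ G.neighborFinset p.2).card ∧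
        (G.neighborFinset p.1 ∩ G.neighborFinset p.2).card < (s + t - 1).choose 2)).card : ℝ)
        / 2 :=
  stmt3_general G A B s t ht hdisj hbip hfree n hB δ hdeg U hUA hU1
end

section
/- Let $s \geq 1$, $t \geq 3$ be integers and let $G$ be a bipartite graph with bipartition $A \cup B$. Suppose there exist distinct vertices $u_1, \dots, u_{t-1}, v_1, \dots, v_s \in A$ such that: (a) $N_G(u_i) \cap N_G(u_j) \cap N_G(u_k) = \emptyset$ for distinct $i,j,k$; (b) $N_G(u_i) \cap N_G(u_j) \cap N_G(v_k) = \emptyset$ for all $i \neq j$ and all $k$; (c) $N_G(u_i) \cap N_G(v_j) \cap N_G(v_k) = \emptyset$ for all $i$ and all $j \neq k$; (d) $N_G(u_i) \cap N_G(u_j) \neq \emptyset$ for all $i \neq j$ and $N_G(u_i) \cap N_G(v_j) \neq \emptyset$ for all $i, j$. Then $G$ contains a copy of $L'_{s,t}$. -/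
open Finset SimpleGraph

lemma sym2_helper {α : Type*} (p q : Sym2 α) (hq : ¬ q.IsDiag) (hne : p ≠ q) :
    ∃ z ∈ q, z ∉ p := by
  induction p using Sym2.ind with | _ a b =>
  induction q using Sym2.ind with | _ x y =>
  by_contra hcon
  push_neg at hcon
  have hx := hcon x (by simp)
  have hy := hcon y (by simp)
  rw [Sym2.mem_iff] at hx hy
  have hxy : x ≠ y := by simpa using hq
  apply hne
  rcases hx with rfl | rfl <;> rcases hy with rfl | rfl
  · exact absurd rfl hxy
  · rfl
  · exact Sym2.eq_swap
  · exact absurd rfl hxy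

theorem stmt9 {V : Type*} [Fintype V] [DecidableEq V] (G : SimpleGraph V)
    [DecidableRel G.Adj] (A B : Finset V) (s t : ℕ) (hs : 1 ≤ s) (ht : 3 ≤ t)
    (hdisj : Disjoint A B) (hpart : A ∪ B = Finset.univ)
    (hbip : ∀ u v, G.Adj u v → (u ∈ A ∧ v ∈ B) ∨ (u ∈ B ∧ v ∈ A))
    (u : Fin (t - 1) → V) (v : Fin s → V)
    (huA : ∀ i, u i ∈ A) (hvA : ∀ j, v j ∈ A)
    (hinj : Function.Injective (Sum.elim u v : Fin (t - 1) ⊕ Fin s → V))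
    (ha : ∀ i j k : Fin (t - 1), i ≠ j → j ≠ k → i ≠ k →
      G.neighborSet (u i) ∩ G.neighborSet (u j) ∩ G.neighborSet (u k) = ∅)
    (hb : ∀ (i j : Fin (t - 1)) (k : Fin s), i ≠ j →
      G.neighborSet (u i) ∩ G.neighborSet (u j) ∩ G.neighborSet (v k) = ∅)
    (hc : ∀ (i : Fin (t - 1)) (j k : Fin s), j ≠ k →
      G.neighborSet (u i) ∩ G.neighborSet (v j) ∩ G.neighborSet (v k) = ∅)
    (hd1 : ∀ i j : Fin (t - 1), i ≠ j →
      (G.neighborSet (u i) ∩ G.neighborSet (u j)).Nonempty)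
    (hd2 : ∀ (i : Fin (t - 1)) (j : Fin s),
      (G.neighborSet (u i) ∩ G.neighborSet (v j)).Nonempty) :
    Contains G (Subdiv (Lst s t)) := by
  classical
  set φ : Fin s ⊕ Fin (t - 1) → V := Sum.elim v u with hφ
  have hφA : ∀ z, φ z ∈ A := by rintro (a | i) <;> simp [φ, hvA, huA]
  have hφinj : Function.Injective φ := by
    rintro (a | i) (b | j) h
    · simpa using hinj (show (Sum.elim u v) (Sum.inr a) = Sum.elim u v (Sum.inr b) from h)
    · exact absurd (hinj (show (Sum.elim u v) (Sum.inr a) = Sum.elim u v (Sum.inl j) from h))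
        (by simp)
    · exact absurd (hinj (show (Sum.elim u v) (Sum.inl i) = Sum.elim u v (Sum.inr b) from h))
        (by simp)
    · simpa using hinj (show (Sum.elim u v) (Sum.inl i) = Sum.elim u v (Sum.inl j) from h)
  have hmem : ∀ (x y z w : V), G.neighborSet x ∩ G.neighborSet y ∩ G.neighborSet z = ∅ →
      ¬ (G.Adj x w ∧ G.Adj y w ∧ G.Adj z w) := by
    rintro x y z w h ⟨h1, h2, h3⟩
    have : w ∈ G.neighborSet x ∩ G.neighborSet y ∩ G.neighborSet z := ⟨⟨h1, h2⟩, h3⟩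
    rw [h] at this
    exact this
  have key : ∀ (z1 z2 z3 : Fin s ⊕ Fin (t - 1)) (w : V), z1 ≠ z2 → z1 ≠ z3 → z2 ≠ z3 →
      (z1.isRight ∨ z2.isRight ∨ z3.isRight) →
      ¬ (G.Adj (φ z1) w ∧ G.Adj (φ z2) w ∧ G.Adj (φ z3) w) := by
    rintro (a | i) (b | j) (c | k) w h12 h13 h23 hr ⟨g1, g2, g3⟩
    · simp at hr
    · exact hmem _ _ _ w (hc k a b (by simpa using h12)) ⟨g3, g1, g2⟩
    · exact hmem _ _ _ w (hc j a c (by simpa using h13)) ⟨g2, g1, g3⟩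
    · exact hmem _ _ _ w (hb j k a (by simpa using h23)) ⟨g2, g3, g1⟩
    · exact hmem _ _ _ w (hc i b c (by simpa using h23)) ⟨g1, g2, g3⟩
    · exact hmem _ _ _ w (hb i k b (by simpa using h13)) ⟨g1, g3, g2⟩
    · exact hmem _ _ _ w (hb i j c (by simpa using h12)) ⟨g1, g2, g3⟩
    · exact hmem _ _ _ w (ha i j k (by simpa using h12) (by simpa using h23)
        (by simpa using h13)) ⟨g1, g2, g3⟩
  have exw : ∀ p ∈ (Lst s t).edgeSet, ∃ w : V, ∀ z ∈ p, G.Adj (φ z) w := by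
    intro p
    induction p using Sym2.ind with | _ x y =>
    intro hp
    rw [SimpleGraph.mem_edgeSet] at hp
    simp only [Lst, SimpleGraph.fromRel_adj] at hp
    obtain ⟨hne, hr⟩ := hp
    rcases x with a | i <;> rcases y with b | j
    · simp at hr
    · obtain ⟨w, hw⟩ := hd2 j a
      refine ⟨w, ?_⟩
      intro z hz
      rw [Sym2.mem_iff] at hz
      rcases hz with rfl | rfl
      · exact hw.2
      · exact hw.1
    · obtain ⟨w, hw⟩ := hd2 i b
      refine ⟨w, ?_⟩
      intro z hz
      rw [Sym2.mem_iff] at hz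
      rcases hz with rfl | rfl
      · exact hw.1
      · exact hw.2
    · obtain ⟨w, hw⟩ := hd1 i j (by simpa using hne)
      refine ⟨w, ?_⟩
      intro z hz
      rw [Sym2.mem_iff] at hz
      rcases hz with rfl | rfl
      · exact hw.1
      · exact hw.2
  choose W hW using fun (e : (Lst s t).edgeSet) => exw e.1 e.2
  have hWB : ∀ e : (Lst s t).edgeSet, W e ∈ B := by
    intro e
    obtain ⟨x, hx⟩ : ∃ x, x ∈ (e.1 : Sym2 (Fin s ⊕ Fin (t - 1))) := by
      have : ∀ p : Sym2 (Fin s ⊕ Fin (t - 1)), ∃ x, x ∈ p := by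
        intro p
        induction p using Sym2.ind with | _ x y =>
        exact ⟨x, Sym2.mem_mk_left x y⟩
      exact this e.1
    have hadj := hW e x hx
    rcases hbip _ _ hadj with ⟨_, h2⟩ | ⟨h1, _⟩
    · exact h2
    · exact absurd h1 (Finset.disjoint_left.mp hdisj (hφA x) ∘ fun h => h)
  have winj : ∀ (p1 p2 : Sym2 (Fin s ⊕ Fin (t - 1))) (hp1 : p1 ∈ (Lst s t).edgeSet)
      (hp2 : p2 ∈ (Lst s t).edgeSet), W ⟨p1, hp1⟩ = W ⟨p2, hp2⟩ → p1 = p2 := by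
    intro p1
    induction p1 using Sym2.ind with | _ x1 y1 =>
    intro p2 hp1 hp2 h
    by_contra hne
    obtain ⟨z3, hz3q, hz3p⟩ := sym2_helper _ p2
      (SimpleGraph.not_isDiag_of_mem_edgeSet _ hp2) hne
    have hadj : (Lst s t).Adj x1 y1 := (SimpleGraph.mem_edgeSet _).mp hp1
    simp only [Lst, SimpleGraph.fromRel_adj] at hadj
    obtain ⟨hne12, hr⟩ := hadj
    rw [Sym2.mem_iff] at hz3p
    push_neg at hz3p
    refine key x1 y1 z3 (W ⟨s(x1, y1), hp1⟩) hne12 (Ne.symm hz3p.1) (Ne.symm hz3p.2)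
      (by tauto) ⟨hW _ x1 (by simp), hW _ y1 (by simp), ?_⟩
    rw [h]
    exact hW ⟨p2, hp2⟩ z3 hz3q
  refine ⟨⟨Sum.elim φ W, ?_⟩, ?_⟩
  · rintro x y hxy
    simp only [Subdiv, SimpleGraph.fromRel_adj] at hxy
    obtain ⟨hne, h | h⟩ := hxy
    · obtain ⟨z, e, rfl, rfl, hz⟩ := h
      exact hW e z hz
    · obtain ⟨z, e, rfl, rfl, hz⟩ := h
      exact (hW e z hz).symm
  · rintro (z1 | e1) (z2 | e2) h
    · have h' : φ z1 = φ z2 := h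
      exact congrArg Sum.inl (hφinj h')
    · have h' : φ z1 = W e2 := h
      have hn := Finset.disjoint_left.mp hdisj (hφA z1)
      rw [h'] at hn
      exact absurd (hWB e2) hn
    · have h' : W e1 = φ z2 := h
      have hn := Finset.disjoint_left.mp hdisj (hφA z2)
      rw [← h'] at hn
      exact absurd (hWB e1) hn
    · obtain ⟨p1, hp1⟩ := e1
      obtain ⟨p2, hp2⟩ := e2
      exact congrArg Sum.inr (Subtype.ext (winj p1 p2 hp1 hp2 (by simpa using h)))
end
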